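/- Equal expectations for the approximate Milstein coarse scheme with arbitrary refinement factor M: assume a, b, h are globally Lipschitz continuous. Then E[S*_n] = E[S^c_n] for every n = 0, 1, ..., N. -/

import Mathlib

open MeasureTheory ProbabilityTheory

/-- Truncated Milstein one-step map
`D^f_i(x, s, w) = a_i(x) s + Σ_j b_{ij}(x) w_j + Σ_{j,k} h_{ijk}(x)(w_j w_k − Ω_{jk} s)`. -/
noncomputable def Df {d D : ℕ}
    (a : (Fin d → ℝ) → Fin d → ℝ)
    (b : (Fin d → ℝ) → Fin d → Fin D → ℝ)
    (h3 : (Fin d → ℝ) → Fin d → Fin D → Fin D → ℝ)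
    (Om : Fin D → Fin D → ℝ)
    (x : Fin d → ℝ) (s : ℝ) (w : Fin D → ℝ) : Fin d → ℝ :=
  fun i => a x i * s + (∑ j, b x i j * w j)
    + ∑ j, ∑ k, h3 x i j k * (w j * w k - Om j k * s)

/-- Quadrature Lévy area `𝒜_{jk} = Σ_{m=1}^{M−1} δ_{k,m} (Σ_{q=0}^{m−1} δ_{j,q})`
built from the sub-increments `δ 0, ..., δ (M-1)`. -/
noncomputable def quadLevy {D : ℕ} (M : ℕ) (δ : ℕ → Fin D → ℝ) (j k : Fin D) : ℝ :=
  ∑ m ∈ Finset.Icc 1 (M - 1), δ m k * ∑ q ∈ Finset.range m, δ q j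

/-- General-`M` coarse one-step map:
`D^{c,M}_i(x₁, x₂, Δt, δ) = a_i(x₁) Δt + Σ_j b_{ij}(x₂) ΔW_j
  + Σ_{j,k} h_{ijk}(x₂)(ΔW_j ΔW_k − Ω_{jk} Δt − 𝒜_{jk} + 𝒜_{kj})`, where
`ΔW_j = Σ_{m<M} δ_{j,m}`. -/
noncomputable def DcM {d D : ℕ}
    (a : (Fin d → ℝ) → Fin d → ℝ)
    (b : (Fin d → ℝ) → Fin d → Fin D → ℝ)
    (h3 : (Fin d → ℝ) → Fin d → Fin D → Fin D → ℝ)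
    (Om : Fin D → Fin D → ℝ)
    (M : ℕ) (x1 x2 : Fin d → ℝ) (s : ℝ) (δ : ℕ → Fin D → ℝ) : Fin d → ℝ :=
  fun i => a x1 i * s + (∑ j, b x2 i j * ∑ m ∈ Finset.range M, δ m j)
    + ∑ j, ∑ k, h3 x2 i j k *
        ((∑ m ∈ Finset.range M, δ m j) * (∑ m ∈ Finset.range M, δ m k)
          - Om j k * s - quadLevy M δ j k + quadLevy M δ k j)


/-!
Both schemes advance by the same drift `a(S*_n) Δt`; everything else in a step is a coefficient
evaluated at the current state, which is a function of the increments of the earlier coarse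
steps, times a weight built from the increments of the current coarse step. These weights are
centred: `E[ΔW_j] = 0`, `E[ΔW_j ΔW_k] = Ω_{jk} Δt` (the sub-increments are independent with
covariance `δt Ω`), and each term `δW_{k,m} δW_{j,q}` (`q < m`) of a quadrature Lévy area has mean
zero by independence. Independence of the past from the current step thus makes the noise terms
of both schemes vanish in expectation, and `E[S*_{n+1}] - E[S*_n] = E[S^c_{n+1}] - E[S^c_n]`.
-/

open Finset

section Independence

variable {Ω : Type*} {mΩ : MeasurableSpace Ω} {μ : Measure Ω}

lemma LipschitzWith.integrable_comp [IsFiniteMeasure μ] {E F : Type*} [NormedAddCommGroup E]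
    [NormedAddCommGroup F] {K : NNReal} {g : E → F} (hg : LipschitzWith K g) {X : Ω → E}
    (hX : Integrable X μ) : Integrable (fun ω => g (X ω)) μ := by
  have hg₀ : LipschitzWith (K + 0) fun x => g x - g 0 := hg.sub (LipschitzWith.const (g 0))
  have := (hg₀.comp_memLp (by simp) (memLp_one_iff_integrable.2 hX)).integrable le_rfl
  exact (this.add (integrable_const (g 0))).congr (ae_of_all _ fun ω => by simp)

lemma ProbabilityTheory.Indep.indepFun_of_measurable {β γ : Type*} [MeasurableSpace β]
    [MeasurableSpace γ] {m₁ m₂ : MeasurableSpace Ω} (hind : Indep m₁ m₂ μ) {f : Ω → β}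
    {g : Ω → γ} (hf : Measurable[m₁] f) (hg : Measurable[m₂] g) : IndepFun f g μ :=
  (IndepFun_iff_Indep f g μ).2 (indep_of_indep_of_le hind hf.comap_le hg.comap_le)

lemma ProbabilityTheory.Indep.integral_mul_eq_zero {m₁ m₂ : MeasurableSpace Ω}
    (hind : Indep m₁ m₂ μ) {f g : Ω → ℝ} (hf : Measurable[m₁] f) (hg : Measurable[m₂] g)
    (hfi : Integrable f μ) (hgi : Integrable g μ) (hg₀ : ∫ ω, g ω ∂μ = 0) :
    Integrable (fun ω => f ω * g ω) μ ∧ ∫ ω, f ω * g ω ∂μ = 0 := by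
  have hfg := hind.indepFun_of_measurable hf hg
  exact ⟨hfg.integrable_mul hfi hgi,
    by rw [← Pi.mul_def, hfg.integral_mul_eq_mul_integral hfi.1 hgi.1, hg₀, mul_zero]⟩

end Independence

section GaussianMoments

variable {Ω : Type*} {mΩ : MeasurableSpace Ω} {μ : Measure Ω}

lemma moments_of_map_eq_gaussianReal {Y : Ω → ℝ} (hY : Measurable Y) {m : ℝ} {v : NNReal}
    (h : μ.map Y = gaussianReal m v) : MemLp Y 2 μ ∧ ∫ ω, Y ω ∂μ = m ∧ Var[Y; μ] = v := by
  have hlaw : HasLaw Y (gaussianReal m v) μ := ⟨hY.aemeasurable, h⟩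
  refine ⟨?_, by rw [hlaw.integral_eq, integral_id_gaussianReal],
    by rw [hlaw.variance_eq, variance_id_gaussianReal]⟩
  have hid : MemLp id 2 (μ.map Y) := h ▸ memLp_id_gaussianReal 2
  exact (memLp_map_measure_iff aestronglyMeasurable_id hY.aemeasurable).1 hid

variable [IsProbabilityMeasure μ] {ι : Type*} [Fintype ι] [DecidableEq ι]

lemma moments_of_map_linear_eq_gaussianReal {X : Ω → ι → ℝ} (hX : Measurable X) {c : ℝ}
    (hc : 0 ≤ c) {Q : ι → ι → ℝ} (hQ_symm : ∀ j k, Q j k = Q k j)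
    (hQ_psd : ∀ u : ι → ℝ, 0 ≤ ∑ j, ∑ k, u j * Q j k * u k)
    (hmap : ∀ u : ι → ℝ, μ.map (fun ω => ∑ j, u j * X ω j)
      = gaussianReal 0 (c * ∑ j, ∑ k, u j * Q j k * u k).toNNReal) :
    (∀ j, MemLp (X · j) 2 μ ∧ ∫ ω, X ω j ∂μ = 0) ∧
      ∀ j k, ∫ ω, X ω j * X ω k ∂μ = c * Q j k := by
  have hlin (u : ι → ℝ) := moments_of_map_eq_gaussianReal (by fun_prop) (hmap u)
  have hvar (u : ι → ℝ) : (((c * ∑ j, ∑ k, u j * Q j k * u k).toNNReal : NNReal) : ℝ)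
      = c * ∑ j, ∑ k, u j * Q j k * u k := Real.coe_toNNReal _ (mul_nonneg hc (hQ_psd u))
  have hsingle (j : ι) : (fun ω => ∑ j', (Pi.single j 1 : ι → ℝ) j' * X ω j') = (X · j) := by
    ext ω; simp [Pi.single_apply]
  have hpair (j k : ι) : (fun ω => ∑ j', (Pi.single j 1 + Pi.single k 1 : ι → ℝ) j' * X ω j')
      = fun ω => X ω j + X ω k := by
    ext ω; simp [Pi.single_apply, add_mul, sum_add_distrib]
  have hcoord (j : ι) :
      MemLp (X · j) 2 μ ∧ ∫ ω, X ω j ∂μ = 0 ∧ Var[(X · j); μ] = c * Q j j := by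
    obtain ⟨h₁, h₂, h₃⟩ := hlin (Pi.single j 1)
    rw [hsingle, hvar] at *
    exact ⟨h₁, h₂, by simpa [Pi.single_apply] using h₃⟩
  refine ⟨fun j => ⟨(hcoord j).1, (hcoord j).2.1⟩, fun j k => ?_⟩
  obtain ⟨hj, hj₀, hjv⟩ := hcoord j
  obtain ⟨hk, hk₀, hkv⟩ := hcoord k
  have hsum := (hlin (Pi.single j 1 + Pi.single k 1)).2.2
  rw [hpair, variance_fun_add hj hk, hjv, hkv, hvar] at hsum
  have hcov : cov[(X · j), (X · k); μ] = c * Q j k := by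
    simp only [Pi.add_apply, Pi.single_apply, add_mul, mul_add, sum_add_distrib] at hsum
    simp only [ite_mul, one_mul, zero_mul, mul_ite, mul_one, mul_zero, sum_ite_eq', mem_univ,
      ↓reduceIte, hQ_symm k j] at hsum
    linarith
  rw [covariance_eq_sub hj hk, hj₀, hk₀] at hcov
  simpa using hcov

end GaussianMoments

section IndepCenteredFamily

variable {Ω : Type*} {mΩ : MeasurableSpace Ω} {μ : Measure Ω} {ι : Type*}

structure IsIndepCenteredFamily (μ : Measure Ω) (M : ℕ) (X : ℕ → Ω → ι → ℝ) (c : ℝ)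
    (Q : ι → ι → ℝ) : Prop where
  memLp : ∀ m < M, ∀ j, MemLp (X m · j) 2 μ
  integral_eq_zero : ∀ m < M, ∀ j, ∫ ω, X m ω j ∂μ = 0
  integral_mul : ∀ m < M, ∀ j k, ∫ ω, X m ω j * X m ω k ∂μ = c * Q j k
  indepFun : ∀ m < M, ∀ m' < M, m ≠ m' → IndepFun (X m) (X m') μ

lemma IsIndepCenteredFamily.of_map_linear_eq_gaussianReal [IsProbabilityMeasure μ] [Fintype ι]
    [DecidableEq ι] {M : ℕ} {X : ℕ → Ω → ι → ℝ} (hX : ∀ m, Measurable (X m))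
    (hind : ∀ m < M, ∀ m' < M, m ≠ m' → IndepFun (X m) (X m') μ) {c : ℝ} (hc : 0 ≤ c)
    {Q : ι → ι → ℝ} (hQ_symm : ∀ j k, Q j k = Q k j)
    (hQ_psd : ∀ u : ι → ℝ, 0 ≤ ∑ j, ∑ k, u j * Q j k * u k)
    (hmap : ∀ m < M, ∀ u : ι → ℝ, μ.map (fun ω => ∑ j, u j * X m ω j)
      = gaussianReal 0 (c * ∑ j, ∑ k, u j * Q j k * u k).toNNReal) :
    IsIndepCenteredFamily μ M X c Q where
  memLp m hm j :=
    ((moments_of_map_linear_eq_gaussianReal (hX m) hc hQ_symm hQ_psd (hmap m hm)).1 j).1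
  integral_eq_zero m hm j :=
    ((moments_of_map_linear_eq_gaussianReal (hX m) hc hQ_symm hQ_psd (hmap m hm)).1 j).2
  integral_mul m hm :=
    (moments_of_map_linear_eq_gaussianReal (hX m) hc hQ_symm hQ_psd (hmap m hm)).2
  indepFun := hind

namespace IsIndepCenteredFamily

variable {M : ℕ} {X : ℕ → Ω → ι → ℝ} {c : ℝ} {Q : ι → ι → ℝ}

lemma integral_mul_eq_ite (hX : IsIndepCenteredFamily μ M X c Q) {m m' : ℕ} (hm : m < M)
    (hm' : m' < M) (j k : ι) :
    Integrable (fun ω => X m ω j * X m' ω k) μ ∧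
      ∫ ω, X m ω j * X m' ω k ∂μ = if m = m' then c * Q j k else 0 := by
  refine ⟨(hX.memLp m hm j).integrable_mul (hX.memLp m' hm' k), ?_⟩
  split_ifs with h
  · subst h; exact hX.integral_mul m hm j k
  · have hjk := (hX.indepFun m hm m' hm' h).comp (measurable_pi_apply j) (measurable_pi_apply k)
    have := hjk.integral_fun_mul_eq_mul_integral (hX.memLp m hm j).aestronglyMeasurable
      (hX.memLp m' hm' k).aestronglyMeasurable
    simp only [Function.comp_apply] at this
    rw [this, hX.integral_eq_zero m hm j, zero_mul]

lemma integral_sum_apply_eq_zero [IsFiniteMeasure μ] (hX : IsIndepCenteredFamily μ M X c Q)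
    (j : ι) :
    Integrable (fun ω => (∑ m ∈ range M, X m ω) j) μ ∧
      ∫ ω, (∑ m ∈ range M, X m ω) j ∂μ = 0 := by
  have hint : ∀ m ∈ range M, Integrable (X m · j) μ :=
    fun m hm => (hX.memLp m (mem_range.1 hm) j).integrable one_le_two
  simp only [Finset.sum_apply]
  refine ⟨integrable_finsetSum _ hint, ?_⟩
  rw [integral_finsetSum _ hint]
  exact sum_eq_zero fun m hm => hX.integral_eq_zero m (mem_range.1 hm) j

lemma integral_sum_apply_mul_sum_apply (hX : IsIndepCenteredFamily μ M X c Q) (j k : ι) :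
    Integrable (fun ω => (∑ m ∈ range M, X m ω) j * (∑ m ∈ range M, X m ω) k) μ ∧
      ∫ ω, (∑ m ∈ range M, X m ω) j * (∑ m ∈ range M, X m ω) k ∂μ = M * c * Q j k := by
  have hterm := fun m (hm : m ∈ range M) m' (hm' : m' ∈ range M) =>
    hX.integral_mul_eq_ite (mem_range.1 hm) (mem_range.1 hm') j k
  simp only [Finset.sum_apply, sum_mul_sum]
  refine ⟨integrable_finsetSum _ fun m hm => integrable_finsetSum _ fun m' hm' =>
    (hterm m hm m' hm').1, ?_⟩
  rw [integral_finsetSum _ fun m hm => integrable_finsetSum _ fun m' hm' => (hterm m hm m' hm').1]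
  calc ∑ m ∈ range M, ∫ ω, ∑ m' ∈ range M, X m ω j * X m' ω k ∂μ
      = ∑ m ∈ range M, c * Q j k := sum_congr rfl fun m hm => by
        rw [integral_finsetSum _ fun m' hm' => (hterm m hm m' hm').1,
          sum_congr rfl fun m' hm' => (hterm m hm m' hm').2, sum_ite_eq, if_pos hm]
    _ = M * c * Q j k := by rw [sum_const, card_range, nsmul_eq_mul, mul_assoc]

end IsIndepCenteredFamily

end IndepCenteredFamily

section MilsteinNoise

variable {d D : ℕ} {a : (Fin d → ℝ) → Fin d → ℝ} {b : (Fin d → ℝ) → Fin d → Fin D → ℝ}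
  {h3 : (Fin d → ℝ) → Fin d → Fin D → Fin D → ℝ}

def milsteinNoise (b : (Fin d → ℝ) → Fin d → Fin D → ℝ)
    (h3 : (Fin d → ℝ) → Fin d → Fin D → Fin D → ℝ)
    (x : Fin d → ℝ) (w : Fin D → ℝ) (q : Fin D → Fin D → ℝ) : Fin d → ℝ :=
  fun i => ∑ j, b x i j * w j + ∑ j, ∑ k, h3 x i j k * q j k

def milsteinWeight (Om : Fin D → Fin D → ℝ) (s : ℝ) (w : Fin D → ℝ) (j k : Fin D) : ℝ :=
  w j * w k - Om j k * s

noncomputable def levyWeight (Om : Fin D → Fin D → ℝ) (M : ℕ) (s : ℝ) (δ : ℕ → Fin D → ℝ)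
    (j k : Fin D) : ℝ :=
  milsteinWeight Om s (∑ m ∈ range M, δ m) j k - quadLevy M δ j k + quadLevy M δ k j

lemma Df_eq (Om : Fin D → Fin D → ℝ) (x : Fin d → ℝ) (s : ℝ) (w : Fin D → ℝ) :
    Df a b h3 Om x s w = s • a x + milsteinNoise b h3 x w (milsteinWeight Om s w) := by
  ext i
  simp only [Df, milsteinNoise, milsteinWeight, Pi.add_apply, Pi.smul_apply, smul_eq_mul]
  ring

lemma DcM_eq (Om : Fin D → Fin D → ℝ) (M : ℕ) (x₁ x₂ : Fin d → ℝ) (s : ℝ)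
    (δ : ℕ → Fin D → ℝ) :
    DcM a b h3 Om M x₁ x₂ s δ
      = s • a x₁ + milsteinNoise b h3 x₂ (∑ m ∈ range M, δ m) (levyWeight Om M s δ) := by
  ext i
  simp only [DcM, milsteinNoise, levyWeight, milsteinWeight, Pi.add_apply, Pi.smul_apply,
    smul_eq_mul, Finset.sum_apply]
  ring

lemma continuous_milsteinNoise (hb : ∀ i j, Continuous fun x => b x i j)
    (hh : ∀ i j k, Continuous fun x => h3 x i j k) :
    Continuous fun p : (Fin d → ℝ) × (Fin D → ℝ) × (Fin D → Fin D → ℝ) =>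
      milsteinNoise b h3 p.1 p.2.1 p.2.2 := by
  refine continuous_pi fun i => ?_
  simp only [milsteinNoise]
  fun_prop

end MilsteinNoise

section CoarseStepWeights

variable {Ω : Type*} {mΩ : MeasurableSpace Ω} {D M : ℕ} {δ : ℕ → Ω → Fin D → ℝ}
  {Om : Fin D → Fin D → ℝ} {s : ℝ} {m : MeasurableSpace Ω}

lemma measurable_sum_range (hδ : ∀ q < M, Measurable[m] (δ q)) :
    Measurable[m] fun ω => ∑ q ∈ range M, δ q ω :=
  Finset.measurable_sum _ fun q hq => hδ q (mem_range.1 hq)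

lemma measurable_quadLevy (hδ : ∀ q < M, Measurable[m] (δ q)) (j k : Fin D) :
    Measurable[m] fun ω => quadLevy M (fun q => δ q ω) j k := by
  have hδ' : ∀ q < M, ∀ j, Measurable[m] fun ω => δ q ω j :=
    fun q hq j => (measurable_pi_apply j).comp (hδ q hq)
  refine Finset.measurable_sum _ fun q hq => (hδ' q (by grind) k).mul ?_
  exact Finset.measurable_sum _ fun p hp => hδ' p (by grind) j

lemma measurable_milsteinWeight (hδ : ∀ q < M, Measurable[m] (δ q)) :
    Measurable[m] fun ω => milsteinWeight Om s (∑ q ∈ range M, δ q ω) := by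
  have hW := measurable_sum_range hδ
  exact measurable_pi_lambda _ fun j => measurable_pi_lambda _ fun k =>
    (((measurable_pi_apply j).comp hW).mul ((measurable_pi_apply k).comp hW)).sub
      measurable_const

lemma measurable_levyWeight (hδ : ∀ q < M, Measurable[m] (δ q)) :
    Measurable[m] fun ω => levyWeight Om M s (fun q => δ q ω) := by
  have hW := measurable_milsteinWeight (Om := Om) (s := s) hδ
  exact measurable_pi_lambda _ fun j => measurable_pi_lambda _ fun k =>
    (((measurable_pi_apply k).comp ((measurable_pi_apply j).comp hW)).sub
      (measurable_quadLevy hδ j k)).add (measurable_quadLevy hδ k j)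

variable {μ : Measure Ω} {c : ℝ}

namespace IsIndepCenteredFamily

lemma integral_quadLevy_eq_zero (hδ : IsIndepCenteredFamily μ M δ c Om) (j k : Fin D) :
    Integrable (fun ω => quadLevy M (fun q => δ q ω) j k) μ ∧
      ∫ ω, quadLevy M (fun q => δ q ω) j k ∂μ = 0 := by
  have hterm : ∀ m ∈ Icc 1 (M - 1), ∀ q ∈ range m,
      Integrable (fun ω => δ m ω k * δ q ω j) μ ∧ ∫ ω, δ m ω k * δ q ω j ∂μ = 0 := by
    intro m hm q hq
    rw [mem_Icc] at hm
    rw [mem_range] at hq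
    have h := hδ.integral_mul_eq_ite (m := m) (m' := q) (by omega) (by omega) k j
    rwa [if_neg (by omega)] at h
  simp only [quadLevy, mul_sum]
  refine ⟨integrable_finsetSum _ fun m hm => integrable_finsetSum _ fun q hq =>
    (hterm m hm q hq).1, ?_⟩
  rw [integral_finsetSum _ fun m hm => integrable_finsetSum _ fun q hq => (hterm m hm q hq).1]
  refine sum_eq_zero fun m hm => ?_
  rw [integral_finsetSum _ fun q hq => (hterm m hm q hq).1]
  exact sum_eq_zero fun q hq => (hterm m hm q hq).2

variable [IsProbabilityMeasure μ]

lemma integral_milsteinWeight_eq_zero (hδ : IsIndepCenteredFamily μ M δ c Om) (hs : M * c = s)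
    (j k : Fin D) :
    Integrable (fun ω => milsteinWeight Om s (∑ q ∈ range M, δ q ω) j k) μ ∧
      ∫ ω, milsteinWeight Om s (∑ q ∈ range M, δ q ω) j k ∂μ = 0 := by
  obtain ⟨hi, hint⟩ := hδ.integral_sum_apply_mul_sum_apply j k
  simp only [milsteinWeight]
  refine ⟨hi.sub (integrable_const _), ?_⟩
  rw [integral_sub hi (integrable_const _), hint, integral_const, probReal_univ, smul_eq_mul,
    one_mul, ← hs]
  ring

lemma integral_levyWeight_eq_zero (hδ : IsIndepCenteredFamily μ M δ c Om) (hs : M * c = s)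
    (j k : Fin D) :
    Integrable (fun ω => levyWeight Om M s (fun q => δ q ω) j k) μ ∧
      ∫ ω, levyWeight Om M s (fun q => δ q ω) j k ∂μ = 0 := by
  obtain ⟨hi, hint⟩ := hδ.integral_milsteinWeight_eq_zero hs j k
  obtain ⟨hjk, hjk₀⟩ := hδ.integral_quadLevy_eq_zero j k
  obtain ⟨hkj, hkj₀⟩ := hδ.integral_quadLevy_eq_zero k j
  simp only [levyWeight]
  refine ⟨(hi.sub' hjk).add hkj, ?_⟩
  rw [integral_add (hi.sub' hjk) hkj, integral_sub hi hjk, hint, hjk₀, hkj₀]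
  norm_num

end IsIndepCenteredFamily

end CoarseStepWeights

section MilsteinPaths

variable {Ω : Type*} {mΩ : MeasurableSpace Ω} {μ : Measure Ω} [IsProbabilityMeasure μ] {d D : ℕ}
  {a : (Fin d → ℝ) → Fin d → ℝ} {b : (Fin d → ℝ) → Fin d → Fin D → ℝ}
  {h3 : (Fin d → ℝ) → Fin d → Fin D → Fin D → ℝ} {Ka Kb Kh : NNReal}

lemma integral_milsteinNoise_eq_zero {F G : MeasurableSpace Ω} (hind : Indep F G μ)
    (hb : ∀ i j, LipschitzWith Kb fun x => b x i j)
    (hh : ∀ i j k, LipschitzWith Kh fun x => h3 x i j k)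
    {X : Ω → Fin d → ℝ} (hX : Measurable[F] X) (hXi : Integrable X μ)
    {W : Ω → Fin D → ℝ} {Q : Ω → Fin D → Fin D → ℝ} (hW : Measurable[G] W)
    (hQ : Measurable[G] Q) (hWc : ∀ j, Integrable (W · j) μ ∧ ∫ ω, W ω j ∂μ = 0)
    (hQc : ∀ j k, Integrable (Q · j k) μ ∧ ∫ ω, Q ω j k ∂μ = 0) (i : Fin d) :
    Integrable (fun ω => milsteinNoise b h3 (X ω) (W ω) (Q ω) i) μ ∧
      ∫ ω, milsteinNoise b h3 (X ω) (W ω) (Q ω) i ∂μ = 0 := by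
  have hB (j : Fin D) : Integrable (fun ω => b (X ω) i j * W ω j) μ ∧
      ∫ ω, b (X ω) i j * W ω j ∂μ = 0 := hind.integral_mul_eq_zero
    ((hb i j).continuous.measurable.comp hX) ((measurable_pi_apply j).comp hW)
    ((hb i j).integrable_comp hXi) (hWc j).1 (hWc j).2
  have hH (j k : Fin D) : Integrable (fun ω => h3 (X ω) i j k * Q ω j k) μ ∧
      ∫ ω, h3 (X ω) i j k * Q ω j k ∂μ = 0 := hind.integral_mul_eq_zero
    ((hh i j k).continuous.measurable.comp hX)
    ((measurable_pi_apply k).comp ((measurable_pi_apply j).comp hQ))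
    ((hh i j k).integrable_comp hXi) (hQc j k).1 (hQc j k).2
  have hBi := integrable_finsetSum univ fun j _ => (hB j).1
  have hHi := integrable_finsetSum univ fun j _ =>
    integrable_finsetSum univ fun k _ => (hH j k).1
  simp only [milsteinNoise]
  refine ⟨hBi.add hHi, ?_⟩
  rw [integral_add hBi hHi, integral_finsetSum _ fun j _ => (hB j).1,
    integral_finsetSum _ fun j _ => integrable_finsetSum univ fun k _ => (hH j k).1]
  simp only [integral_finsetSum _ fun k _ => (hH _ k).1, (hB _).2, (hH _ _).2, sum_const_zero,
    add_zero]

lemma integral_milstein_step {F F' G : MeasurableSpace Ω} (hFF' : F ≤ F') (hGF' : G ≤ F')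
    (hind : Indep F G μ) (ha : ∀ i, LipschitzWith Ka fun x => a x i)
    (hb : ∀ i j, LipschitzWith Kb fun x => b x i j)
    (hh : ∀ i j k, LipschitzWith Kh fun x => h3 x i j k) {s : ℝ}
    {W : Ω → Fin D → ℝ} {Q : Ω → Fin D → Fin D → ℝ} (hW : Measurable[G] W)
    (hQ : Measurable[G] Q) (hWc : ∀ j, Integrable (W · j) μ ∧ ∫ ω, W ω j ∂μ = 0)
    (hQc : ∀ j k, Integrable (Q · j k) μ ∧ ∫ ω, Q ω j k ∂μ = 0)
    {X Y X' : Ω → Fin d → ℝ} (hX : Measurable[F] X) (hXi : Integrable X μ)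
    (hY : Measurable[F] Y) (hYi : Integrable Y μ)
    (hX' : ∀ ω, X' ω = X ω + (s • a (Y ω) + milsteinNoise b h3 (X ω) (W ω) (Q ω))) :
    Measurable[F'] X' ∧ Integrable X' μ ∧
      ∀ i, ∫ ω, X' ω i ∂μ = ∫ ω, X ω i ∂μ + s * ∫ ω, a (Y ω) i ∂μ := by
  have hnoise := integral_milsteinNoise_eq_zero hind hb hh hX hXi hW hQ hWc hQc
  have hdrift (i : Fin d) : Integrable (fun ω => a (Y ω) i) μ := (ha i).integrable_comp hYi
  rw [show X' = _ from funext hX']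
  refine ⟨?_, ?_, fun i => ?_⟩
  · have hnoise_meas := (continuous_milsteinNoise (fun i j => (hb i j).continuous)
      (fun i j k => (hh i j k).continuous)).measurable.comp
      ((hX.mono hFF' le_rfl).prodMk ((hW.mono hGF' le_rfl).prodMk (hQ.mono hGF' le_rfl)))
    have hdrift_meas := (continuous_pi fun i => (ha i).continuous).measurable.comp
      (hY.mono hFF' le_rfl)
    exact (hX.mono hFF' le_rfl).add ((hdrift_meas.const_smul s).add hnoise_meas)
  · exact hXi.add ((Integrable.of_eval hdrift).smul s |>.add
      (Integrable.of_eval fun i => (hnoise i).1))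
  · have hincr : Integrable (fun ω => s * a (Y ω) i + milsteinNoise b h3 (X ω) (W ω) (Q ω) i) μ :=
      ((hdrift i).const_mul s).add (hnoise i).1
    simp only [Pi.add_apply, Pi.smul_apply, smul_eq_mul]
    rw [integral_add (hXi.eval i) hincr, integral_add ((hdrift i).const_mul s) (hnoise i).1,
      (hnoise i).2, integral_const_mul, add_zero]

theorem integral_eq_of_milstein_paths (ha : ∀ i, LipschitzWith Ka fun x => a x i)
    (hb : ∀ i j, LipschitzWith Kb fun x => b x i j)
    (hh : ∀ i j k, LipschitzWith Kh fun x => h3 x i j k)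
    {N : ℕ} {F G : ℕ → MeasurableSpace Ω} (hF : ∀ n, F n ≤ F (n + 1))
    (hG : ∀ n, G n ≤ F (n + 1)) (hind : ∀ n < N, Indep (F n) (G n) μ)
    {s : ℝ} {W : ℕ → Ω → Fin D → ℝ} {Q Q' : ℕ → Ω → Fin D → Fin D → ℝ}
    (hW : ∀ n < N, Measurable[G n] (W n)) (hQ : ∀ n < N, Measurable[G n] (Q n))
    (hQ' : ∀ n < N, Measurable[G n] (Q' n))
    (hWc : ∀ n < N, ∀ j, Integrable (W n · j) μ ∧ ∫ ω, W n ω j ∂μ = 0)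
    (hQc : ∀ n < N, ∀ j k, Integrable (Q n · j k) μ ∧ ∫ ω, Q n ω j k ∂μ = 0)
    (hQ'c : ∀ n < N, ∀ j k, Integrable (Q' n · j k) μ ∧ ∫ ω, Q' n ω j k ∂μ = 0)
    {S S' : ℕ → Ω → Fin d → ℝ} {x₀ : Fin d → ℝ} (hS₀ : ∀ ω, S 0 ω = x₀)
    (hS'₀ : ∀ ω, S' 0 ω = x₀)
    (hS : ∀ n ω, S (n + 1) ω
      = S n ω + (s • a (S n ω) + milsteinNoise b h3 (S n ω) (W n ω) (Q n ω)))
    (hS' : ∀ n ω, S' (n + 1) ω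
      = S' n ω + (s • a (S n ω) + milsteinNoise b h3 (S' n ω) (W n ω) (Q' n ω))) :
    ∀ n ≤ N, ∀ i, ∫ ω, S n ω i ∂μ = ∫ ω, S' n ω i ∂μ := by
  suffices h : ∀ n ≤ N, Measurable[F n] (S n) ∧ Integrable (S n) μ ∧
      Measurable[F n] (S' n) ∧ Integrable (S' n) μ ∧ ∀ i, ∫ ω, S n ω i ∂μ = ∫ ω, S' n ω i ∂μ from
    fun n hn => (h n hn).2.2.2.2
  intro n
  induction n with
  | zero =>
    intro _
    rw [show S 0 = fun _ => x₀ from funext hS₀, show S' 0 = fun _ => x₀ from funext hS'₀]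
    exact ⟨measurable_const, integrable_const _, measurable_const, integrable_const _,
      fun _ => rfl⟩
  | succ n ih =>
    intro hn
    obtain ⟨hSm, hSi, hS'm, hS'i, heq⟩ := ih (by omega)
    replace hn : n < N := by omega
    obtain ⟨hSm₁, hSi₁, hSeq⟩ := integral_milstein_step (hF n) (hG n) (hind n hn) ha hb hh
      (hW n hn) (hQ n hn) (hWc n hn) (hQc n hn) hSm hSi hSm hSi (hS n)
    obtain ⟨hS'm₁, hS'i₁, hS'eq⟩ := integral_milstein_step (hF n) (hG n) (hind n hn) ha hb hh
      (hW n hn) (hQ' n hn) (hWc n hn) (hQ'c n hn) hS'm hS'i hSm hSi (hS' n)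
    exact ⟨hSm₁, hSi₁, hS'm₁, hS'i₁, fun i => by rw [hSeq, hS'eq, heq]⟩

end MilsteinPaths

section IncrementSigma

variable {Ω β : Type*} {mΩ : MeasurableSpace Ω} [mβ : MeasurableSpace β] (N M : ℕ)
  (δW : ℕ → ℕ → Ω → β)

abbrev incrementSigma (S : Set ℕ) : MeasurableSpace Ω :=
  ⨆ q ∈ {q : Fin N × Fin M | (q.1 : ℕ) ∈ S}, mβ.comap (δW q.1 q.2)

variable {N M δW}

lemma incrementSigma_mono {S T : Set ℕ} (hST : S ⊆ T) :
    incrementSigma N M δW S ≤ incrementSigma N M δW T :=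
  biSup_mono fun _ h => hST h

lemma measurable_incrementSigma {S : Set ℕ} {n m : ℕ} (hn : n ∈ S) (hnN : n < N) (hmM : m < M) :
    Measurable[incrementSigma N M δW S] (δW n m) :=
  Measurable.of_comap_le <| le_iSup₂_of_le ((⟨n, hnN⟩, ⟨m, hmM⟩) : Fin N × Fin M) hn le_rfl

lemma indep_incrementSigma {μ : Measure Ω} (hmeas : ∀ n m, Measurable (δW n m))
    (hindep : iIndepFun (fun q : Fin N × Fin M => δW q.1 q.2) μ) {S T : Set ℕ}
    (hST : Disjoint S T) : Indep (incrementSigma N M δW S) (incrementSigma N M δW T) μ :=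
  indep_iSup_of_disjoint (fun _ => (hmeas _ _).comap_le) hindep
    (Set.disjoint_left.2 fun _ hS hT => Set.disjoint_left.1 hST hS hT)

end IncrementSigma

theorem equal_expectations_general_M_general
    (d D : ℕ)
    (a : (Fin d → ℝ) → Fin d → ℝ)
    (b : (Fin d → ℝ) → Fin d → Fin D → ℝ)
    (h3 : (Fin d → ℝ) → Fin d → Fin D → Fin D → ℝ)
    (Ka Kb Kh : NNReal)
    (ha : ∀ i, LipschitzWith Ka fun x => a x i)
    (hb : ∀ i j, LipschitzWith Kb fun x => b x i j)
    (hhl : ∀ i j k, LipschitzWith Kh fun x => h3 x i j k)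
    (Om : Fin D → Fin D → ℝ)
    (hOm_symm : ∀ j k, Om j k = Om k j)
    (hOm_psd : ∀ u : Fin D → ℝ, 0 ≤ ∑ j, ∑ k, u j * Om j k * u k)
    (M : ℕ) (hM : 2 ≤ M) (T : ℝ) (hT : 0 < T) (N : ℕ)
    (Ω₀ : Type*) [MeasurableSpace Ω₀] (μ : Measure Ω₀) [IsProbabilityMeasure μ]
    (δW : ℕ → ℕ → Ω₀ → Fin D → ℝ)
    (hmeas : ∀ n m, Measurable (δW n m))
    (hindep : iIndepFun
      (fun q : Fin N × Fin M => δW ↑q.1 ↑q.2) μ)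
    (hgauss : ∀ n < N, ∀ m < M, ∀ u : Fin D → ℝ,
      Measure.map (fun ω => ∑ j, u j * δW n m ω j) μ
        = gaussianReal 0 (Real.toNNReal ((T / ↑N / ↑M) * ∑ j, ∑ k, u j * Om j k * u k)))
    (S0 : Fin d → ℝ)
    (Sstar Sc : ℕ → Ω₀ → Fin d → ℝ)
    (hstar0 : ∀ ω, Sstar 0 ω = S0)
    (hstar : ∀ n ω, Sstar (n + 1) ω = Sstar n ω
      + Df a b h3 Om (Sstar n ω) (T / ↑N) (∑ m ∈ Finset.range M, δW n m ω))
    (hc0 : ∀ ω, Sc 0 ω = S0)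
    (hc : ∀ n ω, Sc (n + 1) ω = Sc n ω
      + DcM a b h3 Om M (Sstar n ω) (Sc n ω) (T / ↑N) (fun m => δW n m ω)) :
    ∀ n ≤ N, ∀ i, ∫ ω, Sstar n ω i ∂μ = ∫ ω, Sc n ω i ∂μ := by
  have hδt : 0 ≤ T / N / M := by positivity
  have hΔt : (M : ℝ) * (T / N / M) = T / N := by
    field_simp [show (M : ℝ) ≠ 0 from Nat.cast_ne_zero.2 (by omega)]
  have hfam : ∀ n < N, IsIndepCenteredFamily μ M (δW n) (T / N / M) Om := fun n hn =>
    .of_map_linear_eq_gaussianReal (hmeas n)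
      (fun m hm m' hm' hne => hindep.indepFun (i := (⟨n, hn⟩, ⟨m, hm⟩))
        (j := (⟨n, hn⟩, ⟨m', hm'⟩)) (by simpa using hne))
      hδt hOm_symm hOm_psd (hgauss n hn)
  have hblock : ∀ n < N, ∀ m < M, Measurable[incrementSigma N M δW {n}] (δW n m) :=
    fun n hn m hm => measurable_incrementSigma rfl hn hm
  refine integral_eq_of_milstein_paths ha hb hhl
    (F := fun n => incrementSigma N M δW (Set.Iio n)) (G := fun n => incrementSigma N M δW {n})
    (fun n => incrementSigma_mono (Set.Iio_subset_Iio n.le_succ))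
    (fun n => incrementSigma_mono (by simp))
    (fun n _ => indep_incrementSigma hmeas hindep (by simp))
    (fun n hn => measurable_sum_range (hblock n hn))
    (fun n hn => measurable_milsteinWeight (hblock n hn))
    (fun n hn => measurable_levyWeight (hblock n hn))
    (fun n hn => (hfam n hn).integral_sum_apply_eq_zero)
    (fun n hn => (hfam n hn).integral_milsteinWeight_eq_zero hΔt)
    (fun n hn => (hfam n hn).integral_levyWeight_eq_zero hΔt)
    hstar0 hc0 (fun n ω => by rw [hstar, Df_eq]) (fun n ω => by rw [hc, DcM_eq])

theorem equal_expectations_general_M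
    (d D : ℕ) (hd : 1 ≤ d) (hD : 1 ≤ D)
    (a : (Fin d → ℝ) → Fin d → ℝ)
    (b : (Fin d → ℝ) → Fin d → Fin D → ℝ)
    (h3 : (Fin d → ℝ) → Fin d → Fin D → Fin D → ℝ)
    (Ka Kb Kh : NNReal)
    (ha : ∀ i, LipschitzWith Ka fun x => a x i)
    (hb : ∀ i j, LipschitzWith Kb fun x => b x i j)
    (hhl : ∀ i j k, LipschitzWith Kh fun x => h3 x i j k)
    (Om : Fin D → Fin D → ℝ)
    (hOm_symm : ∀ j k, Om j k = Om k j)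
    (hOm_psd : ∀ u : Fin D → ℝ, 0 ≤ ∑ j, ∑ k, u j * Om j k * u k)
    (M : ℕ) (hM : 2 ≤ M) (T : ℝ) (hT : 0 < T) (N : ℕ) (hN : 1 ≤ N)
    (Ω₀ : Type*) [MeasurableSpace Ω₀] (μ : Measure Ω₀) [IsProbabilityMeasure μ]
    (δW : ℕ → ℕ → Ω₀ → Fin D → ℝ)
    (hmeas : ∀ n m, Measurable (δW n m))
    (hindep : iIndepFun
      (fun q : Fin N × Fin M => δW ↑q.1 ↑q.2) μ)
    (hgauss : ∀ n < N, ∀ m < M, ∀ u : Fin D → ℝ,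
      Measure.map (fun ω => ∑ j, u j * δW n m ω j) μ
        = gaussianReal 0 (Real.toNNReal ((T / ↑N / ↑M) * ∑ j, ∑ k, u j * Om j k * u k)))
    (S0 : Fin d → ℝ)
    (Sstar Sc : ℕ → Ω₀ → Fin d → ℝ)
    (hstar0 : ∀ ω, Sstar 0 ω = S0)
    (hstar : ∀ n ω, Sstar (n + 1) ω = Sstar n ω
      + Df a b h3 Om (Sstar n ω) (T / ↑N) (∑ m ∈ Finset.range M, δW n m ω))
    (hc0 : ∀ ω, Sc 0 ω = S0)
    (hc : ∀ n ω, Sc (n + 1) ω = Sc n ω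
      + DcM a b h3 Om M (Sstar n ω) (Sc n ω) (T / ↑N) (fun m => δW n m ω)) :
    ∀ n ≤ N, ∀ i, ∫ ω, Sstar n ω i ∂μ = ∫ ω, Sc n ω i ∂μ :=
  equal_expectations_general_M_general d D a b h3 Ka Kb Kh ha hb hhl Om hOm_symm hOm_psd M hM T hT N
    Ω₀ μ δW hmeas hindep hgauss S0 Sstar Sc hstar0 hstar hc0 hc
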